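/- For the implicit discretization z^{k+1} = z^k + ε(J∇H(z^{k+1}) + z⋆ − z^{k+1}) with step ε > 0, one has H(z^{k+1}) − H(z^k) ≤ −ε·H(z^{k+1}), and hence H(z^k) ≤ (1+ε)^{−k}·H(z^0) for all k. -/

import Mathlib

open RealInnerProductSpace

/-! Convexity at `z^{k+1}` gives `H(z^k) ≥ H(z^{k+1}) + ⟪∇H(z^{k+1}), z^k - z^{k+1}⟫` and
`H(z⋆) ≥ H(z^{k+1}) + ⟪∇H(z^{k+1}), z⋆ - z^{k+1}⟫`. By the scheme, `z^k - z^{k+1}` is `-ε` times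
`J∇H(z^{k+1}) + z⋆ - z^{k+1}`, and the Hamiltonian part `J∇H` is orthogonal to `∇H`, so the first
inner product equals `-ε` times the second, which is at most `-(H(z^{k+1}) - H(z⋆))`. Hence
`(1 + ε) H(z^{k+1}) ≤ H(z^k)`, and iterating gives the geometric rate. -/

/-- The standard symplectic matrix `J` on `ℝ^{2n}`: `J (x, p) = (p, -x)`. -/
def Jmap (n : ℕ) (v : EuclideanSpace ℝ (Fin n ⊕ Fin n)) :
    EuclideanSpace ℝ (Fin n ⊕ Fin n) :=
  WithLp.toLp 2 (fun i => Sum.elim (fun a => v (Sum.inr a)) (fun a => -(v (Sum.inl a))) i)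

theorem inner_self_Jmap (n : ℕ) (v : EuclideanSpace ℝ (Fin n ⊕ Fin n)) :
    ⟪v, Jmap n v⟫ = 0 := by
  simp [PiLp.inner_apply, Jmap, Fintype.sum_sum_type, mul_comm]

theorem ConvexOn.add_fderiv_sub_le {E : Type*} [NormedAddCommGroup E] [NormedSpace ℝ E]
    {s : Set E} {f : E → ℝ} {f' : E →L[ℝ] ℝ} {x y : E} (hf : ConvexOn ℝ s f)
    (hx : x ∈ s) (hy : y ∈ s) (hf' : HasFDerivAt f f' x) :
    f x + f' (y - x) ≤ f y := by
  have hφ : ConvexOn ℝ (Set.Icc 0 1) (f ∘ AffineMap.lineMap (k := ℝ) x y) :=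
    (hf.comp_affineMap _).subset (fun _ ht => hf.1.lineMap_mem hx hy ht) (convex_Icc 0 1)
  have hφ' : HasDerivAt (f ∘ AffineMap.lineMap (k := ℝ) x y) (f' (y - x)) 0 :=
    (by simpa using hf' : HasFDerivAt f f' (AffineMap.lineMap x y (0 : ℝ))).comp_hasDerivAt _
      AffineMap.hasDerivAt_lineMap
  simpa [slope_def_field, map_sub, le_sub_iff_add_le'] using
    hφ.le_slope_of_hasDerivAt (by simp) (by simp) one_pos hφ'

theorem ConvexOn.add_inner_gradient_sub_le {E : Type*} [NormedAddCommGroup E]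
    [InnerProductSpace ℝ E] [CompleteSpace E] {s : Set E} {f : E → ℝ} {g x y : E}
    (hf : ConvexOn ℝ s f) (hx : x ∈ s) (hy : y ∈ s) (hg : HasGradientAt f g x) :
    f x + ⟪g, y - x⟫ ≤ f y :=
  hf.add_fderiv_sub_le hx hy hg.hasFDerivAt

theorem ConvexOn.sub_le_of_implicit_step {E : Type*} [NormedAddCommGroup E]
    [InnerProductSpace ℝ E] [CompleteSpace E] {H : E → ℝ} (hH : ConvexOn ℝ Set.univ H)
    {A : E → E} (hA : ∀ v, ⟪v, A v⟫ = 0) {ε : ℝ} (hε : 0 ≤ ε) {z z' zstar g : E}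
    (hg : HasGradientAt H g z') (hstep : z' = z + ε • (A g + zstar - z')) :
    H z' - H z ≤ -ε * (H z' - H zstar) := by
  have hback := hH.add_inner_gradient_sub_le (Set.mem_univ _) (Set.mem_univ z) hg
  have htarget := hH.add_inner_gradient_sub_le (Set.mem_univ _) (Set.mem_univ zstar) hg
  have hinner : ⟪g, z - z'⟫ = -ε * ⟪g, zstar - z'⟫ := by
    have hdiff : z - z' = -ε • (A g + (zstar - z')) := by
      conv_lhs => rw [hstep]
      module
    rw [hdiff, real_inner_smul_right, inner_add_right, hA, zero_add]
  calc H z' - H z ≤ -⟪g, z - z'⟫ := by linarith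
    _ = ε * ⟪g, zstar - z'⟫ := by rw [hinner]; ring
    _ ≤ ε * (H zstar - H z') := by gcongr; linarith
    _ = -ε * (H z' - H zstar) := by ring

theorem le_inv_one_add_pow_mul {a : ℕ → ℝ} {ε : ℝ} (hε : 0 < 1 + ε)
    (h : ∀ k, a (k + 1) - a k ≤ -ε * a (k + 1)) (k : ℕ) :
    a k ≤ (1 + ε)⁻¹ ^ k * a 0 := by
  induction k with
  | zero => simp
  | succ k ih =>
    have hstep : a (k + 1) ≤ (1 + ε)⁻¹ * a k := by
      rw [inv_mul_eq_div, le_div_iff₀ hε]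
      linarith [h k]
    calc a (k + 1) ≤ (1 + ε)⁻¹ * a k := hstep
      _ ≤ (1 + ε)⁻¹ * ((1 + ε)⁻¹ ^ k * a 0) := by gcongr
      _ = (1 + ε)⁻¹ ^ (k + 1) * a 0 := by ring

theorem stmt7_general (n : ℕ)
    (H : EuclideanSpace ℝ (Fin n ⊕ Fin n) → ℝ)
    (hconv : ConvexOn ℝ Set.univ H)
    (hH : ∀ w, HasGradientAt H (gradient H w) w)
    (zstar : EuclideanSpace ℝ (Fin n ⊕ Fin n))
    (hmin : H zstar = 0)
    (ε : ℝ) (hε : 0 < ε)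
    (z : ℕ → EuclideanSpace ℝ (Fin n ⊕ Fin n))
    (hrec : ∀ k, z (k + 1) =
      z k + ε • (Jmap n (gradient H (z (k + 1))) + zstar - z (k + 1))) :
    (∀ k, H (z (k + 1)) - H (z k) ≤ -ε * H (z (k + 1))) ∧
      ∀ k, H (z k) ≤ (1 + ε)⁻¹ ^ k * H (z 0) := by
  have hdecrease : ∀ k, H (z (k + 1)) - H (z k) ≤ -ε * H (z (k + 1)) := fun k => by
    simpa [hmin] using
      hconv.sub_le_of_implicit_step (inner_self_Jmap n) hε.le (hH (z (k + 1))) (hrec k)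
  exact ⟨hdecrease, le_inv_one_add_pow_mul (by linarith) hdecrease⟩

/-- For the implicit discretization
`z^{k+1} = z^k + ε(J∇H(z^{k+1}) + z⋆ − z^{k+1})` with step `ε > 0`, one has
`H(z^{k+1}) − H(z^k) ≤ −ε·H(z^{k+1})`, and hence
`H(z^k) ≤ (1+ε)^{−k}·H(z^0)` for all `k`. -/
theorem stmt7 (n : ℕ)
    (H : EuclideanSpace ℝ (Fin n ⊕ Fin n) → ℝ)
    (hconv : ConvexOn ℝ Set.univ H)
    (hH : ∀ w, HasGradientAt H (gradient H w) w)
    (zstar : EuclideanSpace ℝ (Fin n ⊕ Fin n))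
    (hmin : H zstar = 0) (hnonneg : ∀ w, 0 ≤ H w)
    (ε : ℝ) (hε : 0 < ε)
    (z : ℕ → EuclideanSpace ℝ (Fin n ⊕ Fin n))
    (hrec : ∀ k, z (k + 1) =
      z k + ε • (Jmap n (gradient H (z (k + 1))) + zstar - z (k + 1))) :
    (∀ k, H (z (k + 1)) - H (z k) ≤ -ε * H (z (k + 1))) ∧
      ∀ k, H (z k) ≤ (1 + ε)⁻¹ ^ k * H (z 0) :=
  stmt7_general n H hconv hH zstar hmin ε hε z hrec
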